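/- arXiv:1307.5676 — 3 statements merged into one kernel-verified Lean document; each statement's English description precedes it below -/
import Mathlib

section
/- Let E be a real separable Banach space and let X_1, X_2, ... be E-valued random variables with partial sums S_n := X_1 + ... + X_n. Suppose (a_n) is a sequence of positive real numbers such that the triangular array (a_n X_j, 1 ≤ j ≤ n, n ≥ 1) is infinitesimal, and suppose (b_n) ⊂ E is such that the distributions of a_n S_n + b_n converge weakly to a non-degenerate Borel probability measure μ on E. Then a_n → 0 as n → ∞. -/
open MeasureTheory Filter Topology

/-! If `a n ≥ δ > 0` for infinitely many `n`, then for each fixed `k` and those `n ≥ k`,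
`P (‖X k‖ > t) ≤ P (a n * ‖X k‖ > δ * t)`, which tends to `0` by infinitesimality; so every `X k`
vanishes almost surely and `a n • S n + b n = b n` a.s. Hence the Dirac masses at `b n` converge
weakly to `μ`. By the portmanteau theorem `b n` eventually enters every open set of positive
`μ`-measure, so `b n` converges to any point `y` of the support of `μ`, which is nonempty since `E`
is separable, and then `μ = δ_y`. -/

lemma ae_eq_zero_of_forall_measure_lt_norm_eq_zero {α F : Type*} [MeasurableSpace α]
    [NormedAddCommGroup F] {μ : Measure α} {g : α → F}
    (h : ∀ t > 0, μ {x | t < ‖g x‖} = 0) : g =ᵐ[μ] 0 :=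
  measure_mono_null
    (fun x (hx : g x ≠ 0) ↦ Set.mem_iUnion.2 (exists_nat_one_div_lt (norm_pos_iff.2 hx)))
    (measure_iUnion_null fun _ : ℕ ↦ h _ Nat.one_div_pos_of_nat)

lemma measure_lt_norm_eq_zero_of_infinitesimal {Ω F : Type*} [MeasurableSpace Ω]
    [NormedAddCommGroup F] {P : Measure Ω} {X : ℕ → Ω → F} {a : ℕ → ℝ}
    (hinfin : ∀ ε > 0,
      Tendsto (fun n => ⨆ k ∈ Finset.Icc 1 n, P {ω | a n * ‖X k ω‖ > ε}) atTop (𝓝 0))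
    {δ : ℝ} (hδ : 0 < δ) (hfreq : ∃ᶠ n in atTop, δ ≤ a n) {k : ℕ} (hk : 1 ≤ k)
    {t : ℝ} (ht : 0 < t) : P {ω | t < ‖X k ω‖} = 0 := by
  refine nonpos_iff_eq_zero.1 (ge_of_tendsto_of_frequently (hinfin (δ * t) (by positivity)) ?_)
  refine (hfreq.and_eventually (eventually_ge_atTop k)).mono fun n ⟨han, hkn⟩ ↦ ?_
  calc P {ω | t < ‖X k ω‖} ≤ P {ω | a n * ‖X k ω‖ > δ * t} :=
        measure_mono fun ω (hω : t < ‖X k ω‖) ↦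
          (mul_lt_mul_of_pos_left hω hδ).trans_le (mul_le_mul_of_nonneg_right han (norm_nonneg _))
    _ ≤ ⨆ j ∈ Finset.Icc 1 n, P {ω | a n * ‖X j ω‖ > δ * t} :=
        le_iSup₂ (f := fun j _ ↦ P {ω | a n * ‖X j ω‖ > δ * t}) k (Finset.mem_Icc.2 ⟨hk, hkn⟩)

section DiracLimits

variable {X : Type*} [TopologicalSpace X] [MeasurableSpace X] [OpensMeasurableSpace X]
  [HasOuterApproxClosed X] {ι : Type*} {L : Filter ι} {x : ι → X} {ν : ProbabilityMeasure X}

lemma eventually_mem_of_tendsto_diracProba (hx : Tendsto (fun i ↦ diracProba (x i)) L (𝓝 ν))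
    {G : Set X} (hG : IsOpen G) (hνG : 0 < (ν : Measure X) G) : ∀ᶠ i in L, x i ∈ G := by
  by_contra h
  have hliminf : L.liminf (fun i ↦ (diracProba (x i) : Measure X) G) ≤ 0 :=
    liminf_le_of_frequently_le' <| (not_eventually.1 h).mono fun i hi ↦ by
      simp [diracProba_toMeasure_apply' _ hG.measurableSet, hi]
  exact hνG.not_ge ((ProbabilityMeasure.le_liminf_measure_open_of_tendsto hx hG).trans hliminf)

lemma tendsto_of_tendsto_diracProba (hx : Tendsto (fun i ↦ diracProba (x i)) L (𝓝 ν)) {y : X}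
    (hy : y ∈ (ν : Measure X).support) : Tendsto x L (𝓝 y) := fun _ hU ↦
  (eventually_mem_of_tendsto_diracProba hx isOpen_interior
    ((Measure.mem_support_iff_forall y).1 hy _ (interior_mem_nhds.2 hU))).mono
    fun _ hi ↦ interior_subset hi

lemma exists_eq_diracProba_of_tendsto_diracProba [BorelSpace X] [HereditarilyLindelofSpace X]
    [L.NeBot] (hx : Tendsto (fun i ↦ diracProba (x i)) L (𝓝 ν)) : ∃ y, ν = diracProba y := by
  obtain ⟨y, hy⟩ := Measure.nonempty_support (NeZero.ne (ν : Measure X))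
  exact ⟨y, tendsto_nhds_unique hx
    ((continuous_diracProba.tendsto y).comp (tendsto_of_tendsto_diracProba hx hy))⟩

end DiracLimits

theorem norming_constants_tendsto_zero_general
    {Ω : Type*} [MeasurableSpace Ω] (P : Measure Ω) [IsProbabilityMeasure P]
    {E : Type*} [NormedAddCommGroup E] [NormedSpace ℝ E]
    [TopologicalSpace.SeparableSpace E] [MeasurableSpace E] [BorelSpace E]
    (X : ℕ → Ω → E)
    (a : ℕ → ℝ) (b : ℕ → E) (μ : Measure E) [IsProbabilityMeasure μ]
    (hapos : ∀ n, 0 < a n)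
    (hinfin : ∀ ε > 0,
      Tendsto (fun n => ⨆ k ∈ Finset.Icc 1 n, P {ω | a n * ‖X k ω‖ > ε})
        atTop (𝓝 0))
    (hconv : ∀ f : BoundedContinuousFunction E ℝ,
      Tendsto (fun n => ∫ ω, f (a n • (∑ k ∈ Finset.Icc 1 n, X k ω) + b n) ∂P)
        atTop (𝓝 (∫ x, f x ∂μ)))
    (hnondeg : ¬ ∃ x : E, μ = Measure.dirac x) :
    Tendsto a atTop (𝓝 0) := by
  refine tendsto_order.2 ⟨fun c hc ↦ .of_forall fun n ↦ hc.trans (hapos n), fun δ hδ ↦ ?_⟩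
  by_contra hev
  have hfreq : ∃ᶠ n in atTop, δ ≤ a n := by simpa only [not_eventually, not_lt] using hev
  have hX : ∀ k ≥ 1, X k =ᵐ[P] 0 := fun k hk ↦ ae_eq_zero_of_forall_measure_lt_norm_eq_zero
    fun t ht ↦ measure_lt_norm_eq_zero_of_infinitesimal hinfin hδ hfreq hk ht
  have hsum : ∀ n, (fun ω ↦ a n • (∑ k ∈ Finset.Icc 1 n, X k ω) + b n) =ᵐ[P] fun _ ↦ b n := by
    intro n
    filter_upwards [(eventually_all_finset _).2 fun k hk ↦ hX k (Finset.mem_Icc.1 hk).1]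
      with ω hω
    rw [Finset.sum_eq_zero hω, smul_zero, zero_add]
  have hdirac : Tendsto (fun n ↦ diracProba (b n)) atTop (𝓝 ⟨μ, ‹_›⟩) := by
    refine ProbabilityMeasure.tendsto_iff_forall_integral_tendsto.2 fun f ↦ ?_
    refine (hconv f).congr fun n ↦ ?_
    rw [integral_congr_ae ((hsum n).mono fun _ ↦ congrArg f)]
    simp [diracProba]
  obtain ⟨x, hx⟩ := exists_eq_diracProba_of_tendsto_diracProba hdirac
  exact hnondeg ⟨x, congrArg ProbabilityMeasure.toMeasure hx⟩

/-- If the triangular array `(a n • X k, 1 ≤ k ≤ n)` is infinitesimal and the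
distributions of `a n • S n + b n` converge weakly to a non-degenerate limit,
then `a n → 0`. -/
theorem norming_constants_tendsto_zero
    {Ω : Type*} [MeasurableSpace Ω] (P : Measure Ω) [IsProbabilityMeasure P]
    {E : Type*} [NormedAddCommGroup E] [NormedSpace ℝ E] [CompleteSpace E]
    [TopologicalSpace.SeparableSpace E] [MeasurableSpace E] [BorelSpace E]
    (X : ℕ → Ω → E) (hXmeas : ∀ k, Measurable (X k))
    (a : ℕ → ℝ) (b : ℕ → E) (μ : Measure E) [IsProbabilityMeasure μ]
    (hapos : ∀ n, 0 < a n)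
    (hinfin : ∀ ε > 0,
      Tendsto (fun n => ⨆ k ∈ Finset.Icc 1 n, P {ω | a n * ‖X k ω‖ > ε})
        atTop (𝓝 0))
    (hconv : ∀ f : BoundedContinuousFunction E ℝ,
      Tendsto (fun n => ∫ ω, f (a n • (∑ k ∈ Finset.Icc 1 n, X k ω) + b n) ∂P)
        atTop (𝓝 (∫ x, f x ∂μ)))
    (hnondeg : ¬ ∃ x : E, μ = Measure.dirac x) :
    Tendsto a atTop (𝓝 0) :=
  norming_constants_tendsto_zero_general P X a b μ hapos hinfin hconv hnondeg
end

section
/- Let (a_n) be a sequence of positive real numbers with a_n → 0 and a_{n+1}/a_n → 1 as n → ∞, and let c ∈ (0,1) be fixed. For each n define m_n := max{k : 1 ≤ k ≤ n−1 and a_n/a_k ≤ c} if such k exists, and m_n := 1 otherwise. Then m_n → ∞, n − m_n → ∞, and a_n/a_{m_n} → c as n → ∞. -/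
/-!
Since `a n → 0`, every fixed index `K` eventually satisfies `a n / a K ≤ c`, so the maximal such
index `m n` tends to infinity. Since consecutive ratios tend to `1`, so does `a n / a (n - i)` for
each fixed `i`; as `c < 1`, the gap `n - m n` cannot stay bounded. Finally, maximality gives
`c < a n / a (m n + 1)`, so `a n / a (m n)` is squeezed between `c * a (m n + 1) / a (m n)` and `c`.
-/

open Filter Topology

section RatioLimits

variable {𝕜 : Type*} [NormedField 𝕜] {a : ℕ → 𝕜}

theorem tendsto_add_div_of_tendsto_succ_div (ha : ∀ n, a n ≠ 0)
    (hratio : Tendsto (fun n => a (n + 1) / a n) atTop (𝓝 1)) (i : ℕ) :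
    Tendsto (fun n => a (n + i) / a n) atTop (𝓝 1) := by
  induction i with
  | zero => simp only [add_zero, div_self (ha _), tendsto_const_nhds]
  | succ i ih =>
    have hstep := (hratio.comp (tendsto_add_atTop_nat i)).mul ih
    rw [one_mul] at hstep
    refine hstep.congr fun n => ?_
    simp only [Function.comp_apply, ← add_assoc]
    exact div_mul_div_cancel₀ (ha _)

theorem tendsto_div_sub_of_tendsto_succ_div (ha : ∀ n, a n ≠ 0)
    (hratio : Tendsto (fun n => a (n + 1) / a n) atTop (𝓝 1)) (i : ℕ) :
    Tendsto (fun n => a n / a (n - i)) atTop (𝓝 1) := by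
  refine ((tendsto_add_div_of_tendsto_succ_div ha hratio i).comp
    (tendsto_sub_atTop_nat i)).congr' ?_
  filter_upwards [eventually_ge_atTop i] with n hn
  simp only [Function.comp_apply, Nat.sub_add_cancel hn]

end RatioLimits

section IndexBelowThreshold

variable {a : ℕ → ℝ} {c : ℝ}

theorem eventually_div_le_of_tendsto_zero (ha0 : Tendsto a atTop (𝓝 0)) {K : ℕ} (hK : 0 < a K)
    (hc : 0 < c) : ∀ᶠ n in atTop, a n / a K ≤ c :=
  (ha0.eventually_lt_const (mul_pos hc hK)).mono fun _ h => (div_le_iff₀ hK).2 h.le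

theorem lt_div_succ_of_forall_le {n k : ℕ} (ha : a n ≠ 0) (hc : c < 1) (hk1 : 1 ≤ k)
    (hkn : k ≤ n - 1) (hmax : ∀ j, 1 ≤ j → j ≤ n - 1 → a n / a j ≤ c → j ≤ k) :
    c < a n / a (k + 1) := by
  rcases Nat.lt_or_ge (n - 1) (k + 1) with hlast | hnext
  · rwa [show k + 1 = n by omega, div_self ha]
  · by_contra! hle
    have := hmax (k + 1) le_add_self hnext hle
    omega

theorem tendsto_sub_atTop_of_div_le (ha : ∀ n, a n ≠ 0)
    (hratio : Tendsto (fun n => a (n + 1) / a n) atTop (𝓝 1)) (hc : c < 1) {m : ℕ → ℕ}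
    (hm : ∀ᶠ n in atTop, m n ≤ n ∧ a n / a (m n) ≤ c) :
    Tendsto (fun n => n - m n) atTop atTop := by
  refine tendsto_atTop.2 fun b => ?_
  have hfar : ∀ᶠ n in atTop, ∀ i ∈ Finset.range (b + 1), c < a n / a (n - i) :=
    (eventually_all_finset _).2 fun i _ =>
      (tendsto_div_sub_of_tendsto_succ_div ha hratio i).eventually_const_lt hc
  filter_upwards [hm, hfar] with n ⟨hmn, hdiv⟩ hfar
  by_contra! hgap
  have := hfar (n - m n) (Finset.mem_range.2 (by omega))
  rw [Nat.sub_sub_self hmn] at this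
  linarith

theorem tendsto_div_of_div_le_lt_div_succ (hapos : ∀ n, 0 < a n)
    (hratio : Tendsto (fun n => a (n + 1) / a n) atTop (𝓝 1)) {m : ℕ → ℕ}
    (hm : Tendsto m atTop atTop)
    (hbracket : ∀ᶠ n in atTop, a n / a (m n) ≤ c ∧ c < a n / a (m n + 1)) :
    Tendsto (fun n => a n / a (m n)) atTop (𝓝 c) := by
  have hlower : Tendsto (fun n => c * (a (m n + 1) / a (m n))) atTop (𝓝 c) := by
    simpa using tendsto_const_nhds.mul (hratio.comp hm)
  refine tendsto_of_tendsto_of_tendsto_of_le_of_le' hlower tendsto_const_nhds ?_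
    (hbracket.mono fun _ h => h.1)
  filter_upwards [hbracket] with n ⟨_, hlt⟩
  calc c * (a (m n + 1) / a (m n))
      ≤ a n / a (m n + 1) * (a (m n + 1) / a (m n)) :=
        mul_le_mul_of_nonneg_right hlt.le (div_pos (hapos _) (hapos _)).le
    _ = a n / a (m n) := div_mul_div_cancel₀ (hapos _).ne'

end IndexBelowThreshold

theorem blocking_indices_properties_general
    (a : ℕ → ℝ) (hapos : ∀ n, 0 < a n)
    (ha0 : Tendsto a atTop (𝓝 0))
    (haratio : Tendsto (fun n => a (n + 1) / a n) atTop (𝓝 1))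
    (c : ℝ) (hc : c ∈ Set.Ioo (0 : ℝ) 1)
    (m : ℕ → ℕ)
    (hm_def : ∀ n, (∃ k, 1 ≤ k ∧ k ≤ n - 1 ∧ a n / a k ≤ c) →
      (1 ≤ m n ∧ m n ≤ n - 1 ∧ a n / a (m n) ≤ c ∧
        ∀ k, 1 ≤ k → k ≤ n - 1 → a n / a k ≤ c → k ≤ m n)) :
    Tendsto m atTop atTop ∧ Tendsto (fun n => n - m n) atTop atTop ∧
      Tendsto (fun n => a n / a (m n)) atTop (𝓝 c) := by
  obtain ⟨hc0, hc1⟩ := hc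
  have hlarge : ∀ K, 1 ≤ K → ∀ᶠ n in atTop,
      (∃ k, 1 ≤ k ∧ k ≤ n - 1 ∧ a n / a k ≤ c) ∧ K ≤ m n := by
    intro K hK
    filter_upwards [eventually_div_le_of_tendsto_zero ha0 (hapos K) hc0, eventually_gt_atTop K]
      with n hdiv hn
    have hex : ∃ k, 1 ≤ k ∧ k ≤ n - 1 ∧ a n / a k ≤ c := ⟨K, hK, by omega, hdiv⟩
    exact ⟨hex, (hm_def n hex).2.2.2 K hK (by omega) hdiv⟩
  have hm_top : Tendsto m atTop atTop :=
    tendsto_atTop.2 fun K => (hlarge (K + 1) le_add_self).mono fun _ h => by omega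
  have hspec : ∀ᶠ n in atTop, m n ≤ n ∧ a n / a (m n) ≤ c ∧ c < a n / a (m n + 1) := by
    filter_upwards [hlarge 1 le_rfl] with n ⟨hex, _⟩
    obtain ⟨hm1, hmn, hdiv, hmax⟩ := hm_def n hex
    exact ⟨by omega, hdiv, lt_div_succ_of_forall_le (hapos n).ne' hc1 hm1 hmn hmax⟩
  have hane : ∀ n, a n ≠ 0 := fun n => (hapos n).ne'
  exact ⟨hm_top,
    tendsto_sub_atTop_of_div_le hane haratio hc1 (hspec.mono fun _ h => ⟨h.1, h.2.1⟩),
    tendsto_div_of_div_le_lt_div_succ hapos haratio hm_top (hspec.mono fun _ h => h.2)⟩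

/-- If `a n → 0`, `a (n+1)/a n → 1` and `m n` is the largest index
`1 ≤ k ≤ n - 1` with `a n / a k ≤ c` (and `m n = 1` if no such index exists),
then `m n → ∞`, `n - m n → ∞` and `a n / a (m n) → c`. -/
theorem blocking_indices_properties
    (a : ℕ → ℝ) (hapos : ∀ n, 0 < a n)
    (ha0 : Tendsto a atTop (𝓝 0))
    (haratio : Tendsto (fun n => a (n + 1) / a n) atTop (𝓝 1))
    (c : ℝ) (hc : c ∈ Set.Ioo (0 : ℝ) 1)
    (m : ℕ → ℕ)
    (hm_def : ∀ n, (∃ k, 1 ≤ k ∧ k ≤ n - 1 ∧ a n / a k ≤ c) →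
      (1 ≤ m n ∧ m n ≤ n - 1 ∧ a n / a (m n) ≤ c ∧
        ∀ k, 1 ≤ k → k ≤ n - 1 → a n / a k ≤ c → k ≤ m n))
    (hm_def' : ∀ n, ¬ (∃ k, 1 ≤ k ∧ k ≤ n - 1 ∧ a n / a k ≤ c) → m n = 1) :
    Tendsto m atTop atTop ∧ Tendsto (fun n => n - m n) atTop atTop ∧
      Tendsto (fun n => a n / a (m n)) atTop (𝓝 c) :=
  blocking_indices_properties_general a hapos ha0 haratio c hc m hm_def
end

section
/- Let E be a real separable Banach space and let X_1, X_2, ... be a sequence of E-valued random variables with partial sums S_n := X_1 + ... + X_n, satisfying: (i) α(X; n) → 0 as n → ∞; (ii) a_n > 0 and the triangular array (a_n X_j, 1 ≤ j ≤ n, n ≥ 1) is infinitesimal; (iii) the distributions of a_n S_n + b_n converge weakly to a non-degenerate Borel probability measure μ on E, for some (b_n) ⊂ E. Fix c ∈ (0,1) and let (m_n), (q_n) be sequences of positive integers with m_n → ∞, n − m_n → ∞, a_n/a_{m_n} → c, q_n → ∞, and m_n + q_n < n for all sufficiently large n, and suppose the random variables V_n := a_n (S_{m_n+q_n} − S_{m_n})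 satisfy ‖V_n‖ → 0 in probability. Then the family of distributions of W_n := a_n (S_n − S_{m_n+q_n}) + b_n − (a_n/a_{m_n}) b_{m_n}, n ≥ 1, is uniformly tight. -/
/-
Write `Y n = a n • S n + b n` and `V n = a n • (S (m n + q n) - S (m n))`, so that the third
block is `W n = Y n - V n - (a n / a (m n)) • Y (m n)`. The laws of `Y n` converge weakly, so
together with their limit they form a compact set of probability measures on the Polish space
`E`, hence a tight family; `V n → 0` in probability, so its laws converge to `δ₀` and are tight
as well; and the ratios `a n / a (m n)` converge, so they stay in a compact set. Tightness of
laws survives pairing and continuous images, which gives the tightness of the laws of `W n`.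
-/

open MeasureTheory Filter Topology

noncomputable section

/-- The measure of dependence `α(𝒜, ℬ)` between two sub-σ-fields. -/
def alphaDep {Ω : Type*} [MeasurableSpace Ω] (P : Measure Ω)
    (𝒜 ℬ : MeasurableSpace Ω) : ℝ :=
  sSup {r : ℝ | ∃ A B : Set Ω, MeasurableSet[𝒜] A ∧ MeasurableSet[ℬ] B ∧
    r = |(P (A ∩ B)).toReal - (P A).toReal * (P B).toReal|}

/-- The σ-field generated by the random variables `X k`, `k ∈ s`. -/
def sigmaGen {Ω E : Type*} [MeasurableSpace E] (X : ℕ → Ω → E) (s : Set ℕ) :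
    MeasurableSpace Ω :=
  ⨆ k ∈ s, MeasurableSpace.comap (X k) inferInstance

/-- The strong mixing coefficient `α(X; n)` of the sequence `X`. -/
def mixingCoef {Ω E : Type*} [MeasurableSpace Ω] [MeasurableSpace E]
    (P : Measure Ω) (X : ℕ → Ω → E) (n : ℕ) : ℝ :=
  ⨆ j : ℕ, alphaDep P (sigmaGen X {k | 1 ≤ k ∧ k ≤ j}) (sigmaGen X {k | j + n ≤ k})

open Set
open scoped ENNReal

section

variable {ι κ Ω E F : Type*} [MeasurableSpace Ω] [MeasurableSpace E] [MeasurableSpace F]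

lemma tendstoInDistribution_id_of_forall_integral_tendsto [TopologicalSpace E]
    [OpensMeasurableSpace E] {P : Measure Ω} [IsProbabilityMeasure P] {μ : Measure E}
    [IsProbabilityMeasure μ] {l : Filter ι} {f : ι → Ω → E}
    (hf : ∀ i, AEMeasurable (f i) P)
    (h : ∀ g : BoundedContinuousFunction E ℝ,
      Tendsto (fun i ↦ ∫ ω, g (f i ω) ∂P) l (𝓝 (∫ x, g x ∂μ))) :
    TendstoInDistribution f l id (fun _ ↦ P) μ where
  forall_aemeasurable := hf
  aemeasurable_limit := aemeasurable_id
  tendsto := by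
    refine ProbabilityMeasure.tendsto_iff_forall_integral_tendsto.2 fun g ↦ ?_
    simpa only [ProbabilityMeasure.coe_mk, integral_map (hf _) g.continuous.aestronglyMeasurable,
      Measure.map_id] using h g

def IsUniformlyTight [TopologicalSpace E] (P : Measure Ω) (f : ι → Ω → E) : Prop :=
  IsTightMeasureSet (range fun i ↦ P.map (f i))

namespace IsUniformlyTight

variable {P : Measure Ω}

lemma of_tendstoInDistribution [PseudoMetricSpace E] [CompleteSpace E]
    [SecondCountableTopology E] [BorelSpace E] [IsProbabilityMeasure P]
    {Ω' : Type*} [MeasurableSpace Ω'] {P' : Measure Ω'} [IsProbabilityMeasure P']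
    {f : ℕ → Ω → E} {Z : Ω' → E}
    (h : TendstoInDistribution f atTop Z (fun _ ↦ P) P') :
    IsUniformlyTight P f := by
  have hcomp := h.tendsto.isCompact_insert_range
  refine (isTightMeasureSet_of_isCompact_closure (hcomp.isClosed.closure_eq ▸ hcomp)).subset ?_
  rintro _ ⟨n, rfl⟩
  exact ⟨_, mem_insert_of_mem _ ⟨n, rfl⟩, rfl⟩

variable [TopologicalSpace E] [TopologicalSpace F] {f : ι → Ω → E} {g : ι → Ω → F}

lemma const [T2Space E] [OpensMeasurableSpace E] {c : ι → E} {K : Set E} (hK : IsCompact K)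
    (hc : ∀ i, c i ∈ K) : IsUniformlyTight P (fun i (_ : Ω) ↦ c i) := by
  refine isTightMeasureSet_iff_exists_isCompact_measure_compl_le.2 fun ε _ ↦ ⟨K, hK, ?_⟩
  rintro _ ⟨i, rfl⟩
  rw [Measure.map_apply measurable_const hK.isClosed.measurableSet.compl]
  simp [hc i]

lemma comp_index (hf : IsUniformlyTight P f) (σ : κ → ι) :
    IsUniformlyTight P (fun j ↦ f (σ j)) :=
  hf.subset (range_comp_subset_range σ fun i ↦ P.map (f i))

lemma prodMk (hf : IsUniformlyTight P f) (hg : IsUniformlyTight P g)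
    (hfm : ∀ i, AEMeasurable (f i) P) (hgm : ∀ i, AEMeasurable (g i) P) :
    IsUniformlyTight P (fun i ω ↦ (f i ω, g i ω)) := by
  refine IsTightMeasureSet.prodMk ?_ ?_
  · rw [← range_comp]
    simpa only [IsUniformlyTight, Function.comp_def, Measure.fst_map_prodMk₀ (hgm _)] using hf
  · rw [← range_comp]
    simpa only [IsUniformlyTight, Function.comp_def, Measure.snd_map_prodMk₀ (hfm _)] using hg

lemma comp_continuous [OpensMeasurableSpace E] [T2Space F] [BorelSpace F]
    (hf : IsUniformlyTight P f) (hfm : ∀ i, AEMeasurable (f i) P) {φ : E → F}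
    (hφ : Continuous φ) : IsUniformlyTight P (fun i ↦ φ ∘ f i) := by
  have := hf.map hφ
  rw [← range_comp] at this
  simpa only [IsUniformlyTight, Function.comp_def,
    AEMeasurable.map_map_of_aemeasurable hφ.aemeasurable (hfm _)] using this

lemma comp₂ {G : Type*} [MeasurableSpace G] [TopologicalSpace G] [T2Space G] [BorelSpace G]
    [OpensMeasurableSpace (E × F)] (hf : IsUniformlyTight P f) (hg : IsUniformlyTight P g)
    (hfm : ∀ i, AEMeasurable (f i) P) (hgm : ∀ i, AEMeasurable (g i) P) {φ : E → F → G}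
    (hφ : Continuous fun p : E × F ↦ φ p.1 p.2) :
    IsUniformlyTight P (fun i ω ↦ φ (f i ω) (g i ω)) :=
  (hf.prodMk hg hfm hgm).comp_continuous (fun i ↦ (hfm i).prodMk (hgm i))
    (φ := fun p ↦ φ p.1 p.2) hφ

lemma exists_isCompact_measure_notMem_le (hf : IsUniformlyTight P f)
    (hfm : ∀ i, AEMeasurable (f i) P) {ε : ℝ≥0∞} (hε : 0 < ε) :
    ∃ K, IsCompact K ∧ ∀ i, P {ω | f i ω ∉ K} ≤ ε := by
  obtain ⟨K, hK, hle⟩ := isTightMeasureSet_iff_exists_isCompact_measure_compl_le.1 hf ε hε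
  exact ⟨K, hK, fun i ↦ (Measure.le_map_apply (hfm i) Kᶜ).trans (hle _ ⟨i, rfl⟩)⟩

end IsUniformlyTight

end

theorem third_block_tight_general
    {Ω : Type*} [MeasurableSpace Ω] (P : Measure Ω) [IsProbabilityMeasure P]
    {E : Type*} [NormedAddCommGroup E] [NormedSpace ℝ E] [CompleteSpace E]
    [TopologicalSpace.SeparableSpace E] [MeasurableSpace E] [BorelSpace E]
    (X : ℕ → Ω → E) (hXmeas : ∀ k, Measurable (X k))
    (a : ℕ → ℝ) (b : ℕ → E) (μ : Measure E) [IsProbabilityMeasure μ]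
    -- (ii) positivity and infinitesimality
    (hapos : ∀ n, 0 < a n)
    -- (iii) weak convergence of `a n • S n + b n` to `μ`
    (hconv : ∀ f : BoundedContinuousFunction E ℝ,
      Tendsto (fun n => ∫ ω, f (a n • (∑ k ∈ Finset.Icc 1 n, X k ω) + b n) ∂P)
        atTop (𝓝 (∫ x, f x ∂μ)))
    -- the blocking sequences
    (c : ℝ)
    (m q : ℕ → ℕ)
    (hratio : Tendsto (fun n => a n / a (m n)) atTop (𝓝 c))
    -- the middle blocks tend to zero in probability
    (hV : ∀ ε > 0,
      Tendsto
        (fun n => P {ω | ε ≤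
          ‖a n • ((∑ k ∈ Finset.Icc 1 (m n + q n), X k ω) -
            ∑ k ∈ Finset.Icc 1 (m n), X k ω)‖})
        atTop (𝓝 0)) :
    -- conclusion: the distributions of the `W n` are uniformly tight
    ∀ ε > 0, ∃ K : Set E, IsCompact K ∧
      ∀ n, P {ω |
        (a n • ((∑ k ∈ Finset.Icc 1 n, X k ω) -
          ∑ k ∈ Finset.Icc 1 (m n + q n), X k ω) +
            b n - (a n / a (m n)) • b (m n)) ∉ K} ≤ ENNReal.ofReal ε := by
  intro ε hε
  set S : ℕ → Ω → E := fun n ω ↦ ∑ k ∈ Finset.Icc 1 n, X k ω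
  set Y : ℕ → Ω → E := fun n ω ↦ a n • S n ω + b n
  set V : ℕ → Ω → E := fun n ω ↦ a n • (S (m n + q n) ω - S (m n) ω)
  set r : ℕ → ℝ := fun n ↦ a n / a (m n)
  have hS (n : ℕ) : Measurable (S n) := Finset.measurable_sum _ fun k _ ↦ hXmeas k
  have hYm (n : ℕ) : AEMeasurable (Y n) P :=
    (((hS n).const_smul (a n)).add_const (b n)).aemeasurable
  have hVm (n : ℕ) : AEMeasurable (V n) P := (((hS _).sub (hS _)).const_smul (a n)).aemeasurable
  have hYVm (n : ℕ) : AEMeasurable (fun ω ↦ Y n ω - V n ω) P := (hYm n).sub (hVm n)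
  have hrYm (n : ℕ) : AEMeasurable (fun ω ↦ r n • Y (m n) ω) P :=
    (hYm (m n)).const_smul (r n)
  have hYt : IsUniformlyTight P Y :=
    .of_tendstoInDistribution (tendstoInDistribution_id_of_forall_integral_tendsto hYm hconv)
  have hVt : IsUniformlyTight P V := .of_tendstoInDistribution
    ((tendstoInMeasure_iff_norm (g := 0).2 (by simpa [V, S] using hV)).tendstoInDistribution hVm)
  have hrt : IsUniformlyTight P (fun n (_ : Ω) ↦ r n) :=
    .const (Metric.isBounded_range_of_tendsto r hratio).isCompact_closure
      fun n ↦ subset_closure (mem_range_self n)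
  have hYVt : IsUniformlyTight P (fun n ω ↦ Y n ω - V n ω) :=
    hYt.comp₂ hVt hYm hVm continuous_sub
  have hrYt : IsUniformlyTight P (fun n ω ↦ r n • Y (m n) ω) :=
    hrt.comp₂ (hYt.comp_index m) (fun _ ↦ aemeasurable_const) (fun n ↦ hYm (m n))
      continuous_smul
  have hWt : IsUniformlyTight P (fun n ω ↦ Y n ω - V n ω - r n • Y (m n) ω) :=
    hYVt.comp₂ hrYt hYVm hrYm continuous_sub
  obtain ⟨K, hK, hKW⟩ := hWt.exists_isCompact_measure_notMem_le
    (fun n ↦ (hYVm n).sub (hrYm n)) (ENNReal.ofReal_pos.2 hε)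
  have hW (n : ℕ) (ω : Ω) : a n • (S n ω - S (m n + q n) ω) + b n - r n • b (m n) =
      Y n ω - V n ω - r n • Y (m n) ω := by
    simp only [Y, V, r, smul_add, smul_sub, smul_smul, div_mul_cancel₀ _ (hapos (m n)).ne']
    abel
  refine ⟨K, hK, fun n ↦ ?_⟩
  simpa only [← hW n] using hKW n

/-- Tightness of the distributions of the third blocks
`W n = a n • (S n - S (m n + q n)) + b n - (a n / a (m n)) • b (m n)`. -/
theorem third_block_tight
    {Ω : Type*} [MeasurableSpace Ω] (P : Measure Ω) [IsProbabilityMeasure P]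
    {E : Type*} [NormedAddCommGroup E] [NormedSpace ℝ E] [CompleteSpace E]
    [TopologicalSpace.SeparableSpace E] [MeasurableSpace E] [BorelSpace E]
    (X : ℕ → Ω → E) (hXmeas : ∀ k, Measurable (X k))
    (a : ℕ → ℝ) (b : ℕ → E) (μ : Measure E) [IsProbabilityMeasure μ]
    -- (i) strong mixing
    (hmix : Tendsto (fun n => mixingCoef P X n) atTop (𝓝 0))
    -- (ii) positivity and infinitesimality
    (hapos : ∀ n, 0 < a n)
    (hinfin : ∀ ε > 0,
      Tendsto (fun n => ⨆ k ∈ Finset.Icc 1 n, P {ω | a n * ‖X k ω‖ > ε})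
        atTop (𝓝 0))
    -- (iii) weak convergence of `a n • S n + b n` to `μ`
    (hconv : ∀ f : BoundedContinuousFunction E ℝ,
      Tendsto (fun n => ∫ ω, f (a n • (∑ k ∈ Finset.Icc 1 n, X k ω) + b n) ∂P)
        atTop (𝓝 (∫ x, f x ∂μ)))
    (hnondeg : ¬ ∃ x : E, μ = Measure.dirac x)
    -- the blocking sequences
    (c : ℝ) (hc : c ∈ Set.Ioo (0 : ℝ) 1)
    (m q : ℕ → ℕ) (hm1 : ∀ n, 1 ≤ m n) (hq1 : ∀ n, 1 ≤ q n)
    (hmTop : Tendsto m atTop atTop)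
    (hnm : Tendsto (fun n => n - m n) atTop atTop)
    (hratio : Tendsto (fun n => a n / a (m n)) atTop (𝓝 c))
    (hqTop : Tendsto q atTop atTop)
    (hmq : ∀ᶠ n in atTop, m n + q n < n)
    -- the middle blocks tend to zero in probability
    (hV : ∀ ε > 0,
      Tendsto
        (fun n => P {ω | ε ≤
          ‖a n • ((∑ k ∈ Finset.Icc 1 (m n + q n), X k ω) -
            ∑ k ∈ Finset.Icc 1 (m n), X k ω)‖})
        atTop (𝓝 0)) :
    -- conclusion: the distributions of the `W n` are uniformly tight
    ∀ ε > 0, ∃ K : Set E, IsCompact K ∧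
      ∀ n, P {ω |
        (a n • ((∑ k ∈ Finset.Icc 1 n, X k ω) -
          ∑ k ∈ Finset.Icc 1 (m n + q n), X k ω) +
            b n - (a n / a (m n)) • b (m n)) ∉ K} ≤ ENNReal.ofReal ε :=
  third_block_tight_general P X hXmeas a b μ hapos hconv c m q hratio hV
end
end
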